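/- Let n ≥ 2, d ≥ 2, k ≥ 1 be integers. For every i, j, ℓ ∈ ℕ with ℓ ≤ j(k−1), there exist a finite sequence of 'degree labels' s₁, …, s_N ∈ {n+1, n, d} realizing connectivity (n+1)^i d^j n^ℓ + 2 from 3, i.e., there is a sequence κ₀ = 3, κ_{t} = s_t(κ_{t−1} − 2) + 2, with κ_N = (n+1)^i d^j n^ℓ + 2, such that the label n+1 is used exactly i times, d exactly j times, n exactly ℓ times, and between any two consecutive uses of d there are at most k−1 uses of n. -/
import Mathlib

open Finset

private lemma mult_card' (k T m2 : ℕ) (hk : 0 < k) (h1 : T ≤ m2 * k)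
    (h2 : ∀ c, c < m2 → c * k < T) :
    ((Finset.range T).filter (fun q => q % k = 0)).card = m2 := by
  have himg : (Finset.range T).filter (fun q => q % k = 0)
      = (Finset.range m2).image (fun c => c * k) := by
    ext q
    simp only [mem_filter, mem_range, mem_image]
    constructor
    · rintro ⟨hq, hm⟩
      exact ⟨q / k, (Nat.div_lt_iff_lt_mul hk).2 (lt_of_lt_of_le hq h1),
        Nat.div_mul_cancel (Nat.dvd_of_mod_eq_zero hm)⟩
    · rintro ⟨c, hc, rfl⟩
      exact ⟨h2 c hc, Nat.mul_mod_left c k⟩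
  rw [himg, Finset.card_image_of_injective _
    (fun c c' h => Nat.eq_of_mul_eq_mul_right hk h), Finset.card_range]

/-- Combinatorial content of Theorem B. For integers `n, d ≥ 2`, `k ≥ 1` and any
`i, j, ℓ ∈ ℕ` with `ℓ ≤ j(k-1)`, there is a finite sequence of degree labels
(label `0 ↦ n+1`, label `1 ↦ n`, label `2 ↦ d`) realizing connectivity
`(n+1)^i d^j n^ℓ + 2` from `3` via `κ_t = s_t (κ_{t-1} - 2) + 2`, using label `n+1`
exactly `i` times, `d` exactly `j` times, `n` exactly `ℓ` times, and with at most `k-1`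
uses of `n` between any two consecutive uses of `d`. -/
theorem stmt_9 (n d k : ℕ) (hn : 2 ≤ n) (hd : 2 ≤ d) (hk : 1 ≤ k)
    (i j ℓ : ℕ) (hℓ : ℓ ≤ j * (k - 1)) :
    ∃ (N : ℕ) (s : Fin N → Fin 3) (κ : Fin (N + 1) → ℕ),
      κ 0 = 3 ∧
      (∀ t : Fin N, κ t.succ = (![n + 1, n, d] (s t)) * (κ t.castSucc - 2) + 2) ∧
      κ (Fin.last N) = (n + 1) ^ i * d ^ j * n ^ ℓ + 2 ∧
      (Finset.univ.filter fun t => s t = (0 : Fin 3)).card = i ∧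
      (Finset.univ.filter fun t => s t = (1 : Fin 3)).card = ℓ ∧
      (Finset.univ.filter fun t => s t = (2 : Fin 3)).card = j ∧
      (∀ t₁ t₂ : Fin N, t₁ < t₂ → s t₁ = 2 → s t₂ = 2 →
        (∀ t : Fin N, t₁ < t → t < t₂ → s t ≠ 2) →
        (Finset.univ.filter fun t => t₁ < t ∧ t < t₂ ∧ s t = (1 : Fin 3)).card ≤ k - 1) := by
  have hk0 : 0 < k := hk
  set e := k - 1 with he
  have hke : k = e + 1 := by omega
  set a := ℓ / e with ha
  set b := ℓ % e with hb
  have hab : a * e + b = ℓ := by rw [ha, hb, mul_comm]; exact Nat.div_add_mod ℓ e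
  have hbe : b = 0 ∨ (0 < b ∧ b < e) := by
    rcases Nat.eq_zero_or_pos e with h0 | h0
    · left
      have hl0 : ℓ = 0 := by rw [h0] at hℓ; omega
      rw [hb, hl0]; simp
    · have : b < e := hb ▸ Nat.mod_lt ℓ h0
      omega
  have haj : a ≤ j := by
    rcases Nat.eq_zero_or_pos e with h0 | h0
    · rw [ha, h0]; simp
    · have h1 : a * e ≤ j * e := le_trans (by omega) hℓ
      exact Nat.le_of_mul_le_mul_right h1 h0
  have haj' : 0 < b → a < j := by
    intro hb0
    have h0 : 0 < e := by rcases hbe with h | h; omega; exact h.1.trans h.2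
    have h1 : a * e < j * e := by
      calc a * e < ℓ := by omega
        _ ≤ j * e := hℓ
    exact Nat.lt_of_mul_lt_mul_right h1
  set m2 : ℕ := if b = 0 then a else a + 1 with hm2
  set r : ℕ := if b = 0 then 0 else b + 1 with hr
  set T := a * k + r with hT
  have hmj : m2 ≤ j := by
    rw [hm2]; split_ifs with h0
    · exact haj
    · exact haj' (by omega)
  have hak : a * k = a * e + a := by rw [hke]; ring
  have hT1 : T = ℓ + m2 := by
    rcases hbe with h0 | h0
    · rw [hT, hm2, hr, if_pos h0, if_pos h0]; omega
    · rw [hT, hm2, hr, if_neg (by omega), if_neg (by omega)]; omega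
  have hT2 : T ≤ m2 * k := by
    have h1 : (a + 1) * k = a * k + k := by ring
    rcases hbe with h0 | h0
    · rw [hT, hm2, hr, if_pos h0, if_pos h0]; omega
    · rw [hT, hm2, hr, if_neg (by omega), if_neg (by omega)]; omega
  have hT3 : ∀ c, c < m2 → c * k < T := by
    intro c hc
    rw [hm2] at hc
    rcases hbe with h0 | h0
    · rw [if_pos h0] at hc
      have h1 : c * k < a * k := (Nat.mul_lt_mul_right hk0).2 hc
      have h2 : r = 0 := by rw [hr, if_pos h0]
      omega
    · rw [if_neg (by omega)] at hc
      have h1 : c * k ≤ a * k := Nat.mul_le_mul_right k (by omega)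
      have h2 : r = b + 1 := by rw [hr, if_neg (by omega)]
      omega
  set p := j - m2 with hp
  set N := i + j + ℓ with hN
  have hpN : i + p + T = N := by omega
  set g : ℕ → Fin 3 := fun q =>
    if q < i then 0 else if q < i + p then 2
    else if (q - (i + p)) % k = 0 then 2 else 1 with hg
  have hg0 : ∀ q, q < i → g q = 0 := by
    intro q hq; rw [hg]; simp only; rw [if_pos hq]
  have hg2 : ∀ q, q < p → g (i + q) = 2 := by
    intro q hq; rw [hg]; simp only
    rw [if_neg (by omega), if_pos (by omega)]
  have hgtail : ∀ q, g (i + p + q) = if q % k = 0 then 2 else 1 := by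
    intro q; rw [hg]; simp only
    rw [if_neg (by omega), if_neg (by omega)]
    have hz : i + p + q - (i + p) = q := by omega
    rw [hz]
  have hmult : ((Finset.range T).filter (fun q => q % k = 0)).card = m2 :=
    mult_card' k T m2 hk0 hT2 hT3
  have hsum2 : (∑ q ∈ Finset.range T, if q % k = 0 then (1 : ℕ) else 0) = m2 := by
    rw [← Finset.card_filter]; exact hmult
  have hsum1 : (∑ q ∈ Finset.range T, if q % k = 0 then (0 : ℕ) else 1) = ℓ := by
    have htot : (∑ q ∈ Finset.range T,
        ((if q % k = 0 then (1 : ℕ) else 0) + (if q % k = 0 then (0 : ℕ) else 1))) = T := by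
      rw [Finset.sum_congr rfl (fun q _ => by split <;> rfl)]
      simp
    rw [Finset.sum_add_distrib, hsum2] at htot
    omega
  have key : ∀ x : Fin 3,
      (Finset.univ.filter fun t : Fin N => g t.val = x).card
        = ∑ q ∈ Finset.range N, (if g q = x then (1 : ℕ) else 0) := by
    intro x
    rw [Finset.card_filter]
    exact Fin.sum_univ_eq_sum_range (fun q => if g q = x then (1 : ℕ) else 0) N
  refine ⟨N, fun t => g t.val, fun t => (∏ u ∈ Finset.range (t : ℕ), ![n + 1, n, d] (g u)) + 2,
    ?_, ?_, ?_, ?_, ?_, ?_, ?_⟩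
  · simp
  · intro t
    simp only [Fin.val_succ, Fin.coe_castSucc, Nat.add_sub_cancel]
    rw [Finset.prod_range_succ]
    ring
  · simp only [Fin.val_last]
    rw [show N = i + p + T from hpN.symm, Finset.prod_range_add, Finset.prod_range_add]
    have hnc : ((Finset.range T).filter (fun q => ¬ q % k = 0)).card = ℓ := by
      have := Finset.card_filter_add_card_filter_not
        (s := Finset.range T) (p := fun q => q % k = 0)
      rw [hmult, Finset.card_range] at this
      omega
    have e1 : (∏ u ∈ Finset.range i, ![n + 1, n, d] (g u)) = (n + 1) ^ i :=
      calc (∏ u ∈ Finset.range i, ![n + 1, n, d] (g u))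
          = ∏ _u ∈ Finset.range i, (n + 1) :=
            Finset.prod_congr rfl (fun q hq => by
              rw [hg0 q (Finset.mem_range.1 hq)]; simp)
        _ = (n + 1) ^ i := by simp
    have e2 : (∏ q ∈ Finset.range p, ![n + 1, n, d] (g (i + q))) = d ^ p :=
      calc (∏ q ∈ Finset.range p, ![n + 1, n, d] (g (i + q)))
          = ∏ _q ∈ Finset.range p, d :=
            Finset.prod_congr rfl (fun q hq => by
              rw [hg2 q (Finset.mem_range.1 hq)]
              simp [Matrix.cons_val_two, Matrix.tail_cons])
        _ = d ^ p := by simp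
    have e3 : (∏ q ∈ Finset.range T, ![n + 1, n, d] (g (i + p + q))) = d ^ m2 * n ^ ℓ :=
      calc (∏ q ∈ Finset.range T, ![n + 1, n, d] (g (i + p + q)))
          = ∏ q ∈ Finset.range T, (if q % k = 0 then d else n) :=
            Finset.prod_congr rfl (fun q _ => by
              rw [hgtail q]
              by_cases hqk : q % k = 0 <;>
                simp [hqk, Matrix.cons_val_two, Matrix.tail_cons])
        _ = (∏ q ∈ (Finset.range T).filter (fun q => q % k = 0), d) *
            ∏ q ∈ (Finset.range T).filter (fun q => ¬ q % k = 0), n :=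
            Finset.prod_ite _ _
        _ = d ^ m2 * n ^ ℓ := by
            rw [Finset.prod_const, Finset.prod_const, hmult, hnc]
    rw [e1, e2, e3, show j = p + m2 by omega, pow_add]
    ring
  · rw [key 0, show N = i + p + T from hpN.symm, Finset.sum_range_add, Finset.sum_range_add]
    have e1 : (∑ q ∈ Finset.range i, if g q = 0 then (1 : ℕ) else 0) = i :=
      calc (∑ q ∈ Finset.range i, if g q = 0 then (1 : ℕ) else 0)
          = ∑ _q ∈ Finset.range i, (1 : ℕ) :=
            Finset.sum_congr rfl (fun q hq => by rw [hg0 q (Finset.mem_range.1 hq)]; simp)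
        _ = i := by simp
    have e2 : (∑ q ∈ Finset.range p, if g (i + q) = 0 then (1 : ℕ) else 0) = 0 :=
      calc (∑ q ∈ Finset.range p, if g (i + q) = 0 then (1 : ℕ) else 0)
          = ∑ _q ∈ Finset.range p, (0 : ℕ) :=
            Finset.sum_congr rfl (fun q hq => by rw [hg2 q (Finset.mem_range.1 hq)]; simp)
        _ = 0 := by simp
    have e3 : (∑ q ∈ Finset.range T, if g (i + p + q) = 0 then (1 : ℕ) else 0) = 0 :=
      calc (∑ q ∈ Finset.range T, if g (i + p + q) = 0 then (1 : ℕ) else 0)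
          = ∑ _q ∈ Finset.range T, (0 : ℕ) :=
            Finset.sum_congr rfl (fun q _ => by
              rw [hgtail q]; by_cases hqk : q % k = 0 <;> simp [hqk])
        _ = 0 := by simp
    rw [e1, e2, e3]
    omega
  · rw [key 1, show N = i + p + T from hpN.symm, Finset.sum_range_add, Finset.sum_range_add]
    have e1 : (∑ q ∈ Finset.range i, if g q = 1 then (1 : ℕ) else 0) = 0 :=
      calc (∑ q ∈ Finset.range i, if g q = 1 then (1 : ℕ) else 0)
          = ∑ _q ∈ Finset.range i, (0 : ℕ) :=
            Finset.sum_congr rfl (fun q hq => by rw [hg0 q (Finset.mem_range.1 hq)]; simp)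
        _ = 0 := by simp
    have e2 : (∑ q ∈ Finset.range p, if g (i + q) = 1 then (1 : ℕ) else 0) = 0 :=
      calc (∑ q ∈ Finset.range p, if g (i + q) = 1 then (1 : ℕ) else 0)
          = ∑ _q ∈ Finset.range p, (0 : ℕ) :=
            Finset.sum_congr rfl (fun q hq => by rw [hg2 q (Finset.mem_range.1 hq)]; simp)
        _ = 0 := by simp
    have e3 : (∑ q ∈ Finset.range T, if g (i + p + q) = 1 then (1 : ℕ) else 0) = ℓ :=
      calc (∑ q ∈ Finset.range T, if g (i + p + q) = 1 then (1 : ℕ) else 0)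
          = ∑ q ∈ Finset.range T, (if q % k = 0 then (0 : ℕ) else 1) :=
            Finset.sum_congr rfl (fun q _ => by
              rw [hgtail q]; by_cases hqk : q % k = 0 <;> simp [hqk])
        _ = ℓ := hsum1
    rw [e1, e2, e3]
    omega
  · rw [key 2, show N = i + p + T from hpN.symm, Finset.sum_range_add, Finset.sum_range_add]
    have e1 : (∑ q ∈ Finset.range i, if g q = 2 then (1 : ℕ) else 0) = 0 :=
      calc (∑ q ∈ Finset.range i, if g q = 2 then (1 : ℕ) else 0)
          = ∑ _q ∈ Finset.range i, (0 : ℕ) :=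
            Finset.sum_congr rfl (fun q hq => by rw [hg0 q (Finset.mem_range.1 hq)]; simp)
        _ = 0 := by simp
    have e2 : (∑ q ∈ Finset.range p, if g (i + q) = 2 then (1 : ℕ) else 0) = p :=
      calc (∑ q ∈ Finset.range p, if g (i + q) = 2 then (1 : ℕ) else 0)
          = ∑ _q ∈ Finset.range p, (1 : ℕ) :=
            Finset.sum_congr rfl (fun q hq => by rw [hg2 q (Finset.mem_range.1 hq)]; simp)
        _ = p := by simp
    have e3 : (∑ q ∈ Finset.range T, if g (i + p + q) = 2 then (1 : ℕ) else 0) = m2 :=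
      calc (∑ q ∈ Finset.range T, if g (i + p + q) = 2 then (1 : ℕ) else 0)
          = ∑ q ∈ Finset.range T, (if q % k = 0 then (1 : ℕ) else 0) :=
            Finset.sum_congr rfl (fun q _ => by
              rw [hgtail q]; by_cases hqk : q % k = 0 <;> simp [hqk])
        _ = m2 := hsum2
    rw [e1, e2, e3]
    omega
  · intro t₁ t₂ hlt h1 h2 hno
    show (Finset.univ.filter fun t : Fin N => t₁ < t ∧ t < t₂ ∧ g t.val = 1).card ≤ k - 1
    have h1' : g (t₁ : ℕ) = 2 := h1
    have hcard : (Finset.univ.filter fun t : Fin N => t₁ < t ∧ t < t₂ ∧ g t.val = 1).card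
        ≤ (Finset.Ioo t₁ t₂).card := by
      apply Finset.card_le_card
      intro t ht
      simp only [Finset.mem_filter, Finset.mem_univ, true_and] at ht
      exact Finset.mem_Ioo.2 ⟨ht.1, ht.2.1⟩
    rw [Fin.card_Ioo] at hcard
    have hclaim : (t₂ : ℕ) ≤ (t₁ : ℕ) + k := by
      by_contra hc
      push_neg at hc
      by_cases hA : (t₁ : ℕ) < i
      · rw [hg0 _ hA] at h1'
        exact absurd h1' (by decide)
      · by_cases hB : (t₁ : ℕ) < i + p
        · have hu : (t₁ : ℕ) + 1 < N := by have := t₂.isLt; omega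
          have hu2 : g ((t₁ : ℕ) + 1) = 2 := by
            rw [hg]; simp only
            rw [if_neg (by omega)]
            by_cases hC : (t₁ : ℕ) + 1 < i + p
            · rw [if_pos hC]
            · rw [if_neg hC, if_pos (by
                have hz : (t₁ : ℕ) + 1 - (i + p) = 0 := by omega
                rw [hz]; simp)]
          exact hno ⟨(t₁ : ℕ) + 1, hu⟩ (by rw [Fin.lt_def]; exact Nat.lt_succ_self _)
            (by rw [Fin.lt_def]; show (t₁ : ℕ) + 1 < (t₂ : ℕ); omega) hu2
        · have hq : ((t₁ : ℕ) - (i + p)) % k = 0 := by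
            rw [hg] at h1'; simp only at h1'
            rw [if_neg hA, if_neg hB] at h1'
            by_contra hcc
            rw [if_neg hcc] at h1'
            exact absurd h1' (by decide)
          have hu : (t₁ : ℕ) + k < N := by have := t₂.isLt; omega
          have hu2 : g ((t₁ : ℕ) + k) = 2 := by
            rw [hg]; simp only
            rw [if_neg (by omega), if_neg (by omega), if_pos (by
              have hz : (t₁ : ℕ) + k - (i + p) = ((t₁ : ℕ) - (i + p)) + k := by omega
              rw [hz, Nat.add_mod_right]
              exact hq)]
          exact hno ⟨(t₁ : ℕ) + k, hu⟩ (by rw [Fin.lt_def]; show (t₁ : ℕ) < (t₁ : ℕ) + k; omega)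
            (by rw [Fin.lt_def]; exact hc) hu2
    omega
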